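/- Let c > 0 and φ_c(s) := √c · tanh(√c · s/√2). There exists λ₀ > 0 such that for every continuously differentiable z : ℝ → ℝ with z and z' square integrable on ℝ and satisfying the orthogonality condition ∫_ℝ z(x)·φ_c'(x) dx = 0, one has (1/2)·∫_ℝ (z'(x)² + 2c·z(x)² − 3·(c − φ_c(x)²)·z(x)²) dx ≥ λ₀·∫_ℝ (z'(x)² + z(x)²) dx. -/

import Mathlib

/-- The mKdV kink profile `φ_c(s) = √c · tanh(√c · s / √2)`. -/
noncomputable def kink (c : ℝ) (s : ℝ) : ℝ :=
  Real.sqrt c * Real.tanh (Real.sqrt c * s / Real.sqrt 2)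

/-!
With `k = √c / √2` the kink is `√c · tanh (k x)` and the quadratic form factorises:
integrating the derivative of `2k tanh (k x) z²` gives `Q(z) = ∫ (z' + 2k tanh (k x) z)²`, and
the first-order operator `z ↦ z' + 2k tanh (k x) z` annihilates `1 - tanh² (k x)`, a multiple
of `φ_c'`. If `z ⊥ φ_c'`, then `∫ z² ≤ ∫ y²` for `y = z - z(0) (1 - tanh² (k x))`, which
vanishes at `0` and has the same image as `z` under the operator. On each half-line,
integrating `(n y²)'` against the multiplier `n = ±2 - tanh (k x)` yields
`∫ y² ≤ 16/k² ∫ (y' + 2k tanh (k x) y)²`, i.e. `∫ z² ≤ (32/c) Q(z)`. Together with the trivial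
bound `Q(z) ≥ ∫ z'² - c ∫ z²` this controls the full `H¹` norm.
-/

open Real MeasureTheory Set Filter Topology

namespace Real

theorem hasDerivAt_tanh (x : ℝ) : HasDerivAt tanh (1 - tanh x ^ 2) x := by
  have h := (hasDerivAt_sinh x).div (hasDerivAt_cosh x) (cosh_pos x).ne'
  rw [show sinh / cosh = tanh from funext fun y => (tanh_eq_sinh_div_cosh y).symm] at h
  refine h.congr_deriv ?_
  have := cosh_pos x
  rw [tanh_eq_sinh_div_cosh]
  field_simp

@[fun_prop]
theorem continuous_tanh : Continuous tanh :=
  continuous_iff_continuousAt.2 fun x => (hasDerivAt_tanh x).continuousAt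

theorem one_sub_tanh_sq_nonneg (x : ℝ) : 0 ≤ 1 - tanh x ^ 2 :=
  sub_nonneg.2 (tanh_sq_lt_one x).le

theorem one_sub_tanh_sq_le_inv_one_add_sq (x : ℝ) : 1 - tanh x ^ 2 ≤ (1 + x ^ 2)⁻¹ := by
  have hsinh : x ^ 2 ≤ sinh x ^ 2 := by
    rw [← sq_abs x, ← sq_abs (sinh x), abs_sinh]
    exact pow_le_pow_left₀ (abs_nonneg x) (self_le_sinh_iff.2 (abs_nonneg x)) 2
  have hcosh : 1 - tanh x ^ 2 = (1 + sinh x ^ 2)⁻¹ := by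
    have := cosh_pos x
    rw [tanh_eq_sinh_div_cosh, ← cosh_sq']
    field_simp
    rw [cosh_sq]; ring
  rw [hcosh]
  gcongr

theorem tanh_nonneg {x : ℝ} (hx : 0 ≤ x) : 0 ≤ tanh x := by
  rw [tanh_eq_sinh_div_cosh]
  exact div_nonneg (sinh_nonneg_iff.2 hx) (cosh_pos x).le

theorem hasDerivAt_tanh_mul (k x : ℝ) :
    HasDerivAt (fun x => tanh (k * x)) (k * (1 - tanh (k * x) ^ 2)) x := by
  have h := (hasDerivAt_tanh (k * x)).comp x ((hasDerivAt_id x).const_mul k)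
  rw [mul_one, mul_comm] at h
  exact h

end Real

theorem integral_sq_le_integral_sub_mul_sq {α : Type*} [MeasurableSpace α] {μ : Measure α}
    {f g : α → ℝ} (hf : MemLp f 2 μ) (hg : MemLp g 2 μ) (horth : ∫ x, f x * g x ∂μ = 0)
    (a : ℝ) : ∫ x, f x ^ 2 ∂μ ≤ ∫ x, (f x - a * g x) ^ 2 ∂μ := by
  have hfg : Integrable (fun x => f x * g x) μ := hf.integrable_mul hg
  have hcross : Integrable (fun x => f x ^ 2 - 2 * a * (f x * g x)) μ :=
    hf.integrable_sq.sub (hfg.const_mul _)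
  have hexpand : ∫ x, (f x - a * g x) ^ 2 ∂μ = ∫ x, f x ^ 2 ∂μ + a ^ 2 * ∫ x, g x ^ 2 ∂μ := by
    calc ∫ x, (f x - a * g x) ^ 2 ∂μ
        = ∫ x, (f x ^ 2 - 2 * a * (f x * g x)) + a ^ 2 * g x ^ 2 ∂μ := by
          congr 1; ext x; ring
      _ = ∫ x, f x ^ 2 ∂μ + a ^ 2 * ∫ x, g x ^ 2 ∂μ := by
          rw [integral_add hcross (hg.integrable_sq.const_mul _),
            integral_sub hf.integrable_sq (hfg.const_mul _), integral_const_mul,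
            integral_const_mul, horth, mul_zero, sub_zero]
  rw [hexpand]
  exact le_add_of_nonneg_right (mul_nonneg (sq_nonneg a) (integral_nonneg fun x => sq_nonneg _))

theorem integral_sq_deriv_add_mul_eq {z z' V V' : ℝ → ℝ} {B B' : ℝ}
    (hz : ∀ x, HasDerivAt z (z' x) x) (hV : ∀ x, HasDerivAt V (V' x) x)
    (hV'c : Continuous V') (hVB : ∀ x, |V x| ≤ B)
    (hV'B : ∀ x, |V' x| ≤ B') (hz2 : MemLp z 2) (hz'2 : MemLp z' 2) :
    ∫ x, (z' x + V x * z x) ^ 2 = ∫ x, (z' x ^ 2 + (V x ^ 2 - V' x) * z x ^ 2) := by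
  have hzc : Continuous z := continuous_iff_continuousAt.2 fun x => (hz x).continuousAt
  have hVc : Continuous V := continuous_iff_continuousAt.2 fun x => (hV x).continuousAt
  have hPB : ∀ x, |V x ^ 2 - V' x| ≤ B ^ 2 + B' := fun x =>
    (abs_sub _ _).trans (add_le_add
      (by rw [abs_pow]; exact pow_le_pow_left₀ (abs_nonneg _) (hVB x) 2) (hV'B x))
  have hbdd : ∀ {W f : ℝ → ℝ} {C : ℝ}, Continuous W → (∀ x, |W x| ≤ C) → Integrable f →
      Integrable (fun x => W x * f x) := fun hW hWC hf =>
    hf.bdd_mul hW.aestronglyMeasurable (ae_of_all _ hWC)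
  have hflux : ∀ x, HasDerivAt (fun x => V x * z x ^ 2)
      (V' x * z x ^ 2 + V x * (2 * (z x * z' x))) x := fun x =>
    ((hV x).mul ((hz x).pow 2)).congr_deriv (by simp only [Pi.pow_apply]; push_cast; ring)
  have hflux'_int : Integrable (fun x => V' x * z x ^ 2 + V x * (2 * (z x * z' x))) :=
    (hbdd hV'c hV'B hz2.integrable_sq).add
      (hbdd hVc hVB ((hz2.integrable_mul hz'2).const_mul 2))
  have hP_int : Integrable (fun x => z' x ^ 2 + (V x ^ 2 - V' x) * z x ^ 2) :=
    hz'2.integrable_sq.add (hbdd (by fun_prop) hPB hz2.integrable_sq)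
  have hflux_zero := integral_eq_zero_of_hasDerivAt_of_integrable hflux hflux'_int
    (hbdd hVc hVB hz2.integrable_sq)
  calc ∫ x, (z' x + V x * z x) ^ 2
      = ∫ x, (z' x ^ 2 + (V x ^ 2 - V' x) * z x ^ 2)
          + (V' x * z x ^ 2 + V x * (2 * (z x * z' x))) := by
        congr 1; ext x; ring
    _ = ∫ x, (z' x ^ 2 + (V x ^ 2 - V' x) * z x ^ 2) := by
        rw [integral_add hP_int hflux'_int, hflux_zero, add_zero]

theorem integral_sq_le_of_multiplier {y y' n n' V : ℝ → ℝ} {a b α M : ℝ} (hab : a ≤ b)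
    (hα : 0 < α) (hy : ∀ x, HasDerivAt y (y' x) x) (hn : ∀ x, HasDerivAt n (n' x) x)
    (hy'c : Continuous y') (hn'c : Continuous n') (hVc : Continuous V)
    (hcoer : ∀ x ∈ Icc a b, α ≤ 2 * V x * n x - n' x) (hM : ∀ x ∈ Icc a b, n x ^ 2 ≤ M)
    (hbdry : n a * y a ^ 2 ≤ n b * y b ^ 2) :
    ∫ x in a..b, y x ^ 2 ≤ 4 * M / α ^ 2 * ∫ x in a..b, (y' x + V x * y x) ^ 2 := by
  have hyc : Continuous y := continuous_iff_continuousAt.2 fun x => (hy x).continuousAt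
  have hnc : Continuous n := continuous_iff_continuousAt.2 fun x => (hn x).continuousAt
  set w := fun x => y' x + V x * y x
  have hwc : Continuous w := by fun_prop
  set D := fun x => (n' x - 2 * V x * n x) * y x ^ 2 + 2 * n x * y x * w x
  have hD : ∀ x, HasDerivAt (fun x => n x * y x ^ 2) (D x) x := fun x =>
    ((hn x).mul ((hy x).pow 2)).congr_deriv (by simp only [D, w, Pi.pow_apply]; push_cast; ring)
  have hFTC : ∫ x in a..b, D x = n b * y b ^ 2 - n a * y a ^ 2 :=
    intervalIntegral.integral_eq_sub_of_hasDerivAt (fun x _ => hD x)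
      ((by fun_prop : Continuous D).intervalIntegrable a b)
  have hpt : ∀ x ∈ Icc a b, α * D x ≤ 2 * M * w x ^ 2 - α ^ 2 / 2 * y x ^ 2 := by
    intro x hx
    have h1 := mul_le_mul_of_nonneg_right (hcoer x hx) (sq_nonneg (y x))
    have h2 := mul_le_mul_of_nonneg_right (hM x hx) (sq_nonneg (w x))
    nlinarith [sq_nonneg (α * y x - 2 * n x * w x)]
  have hw_int : IntervalIntegrable (fun x => 2 * M * w x ^ 2) volume a b :=
    (by fun_prop : Continuous fun x => 2 * M * w x ^ 2).intervalIntegrable a b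
  have hy_int : IntervalIntegrable (fun x => α ^ 2 / 2 * y x ^ 2) volume a b :=
    (by fun_prop : Continuous fun x => α ^ 2 / 2 * y x ^ 2).intervalIntegrable a b
  have hmono := intervalIntegral.integral_mono_on hab
    ((by fun_prop : Continuous fun x => α * D x).intervalIntegrable a b) (hw_int.sub hy_int) hpt
  rw [intervalIntegral.integral_const_mul, hFTC, intervalIntegral.integral_sub hw_int hy_int,
    intervalIntegral.integral_const_mul, intervalIntegral.integral_const_mul] at hmono
  simp only [w] at hmono
  rw [div_mul_eq_mul_div, le_div_iff₀ (by positivity)]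
  nlinarith [mul_nonneg hα.le (sub_nonneg.2 hbdry)]

theorem intervalIntegral_sq_le_of_apply_zero {k R : ℝ} {y y' : ℝ → ℝ} (hk : 0 < k)
    (hR : 0 ≤ R) (hy : ∀ x, HasDerivAt y (y' x) x) (hy'c : Continuous y') (hy0 : y 0 = 0) :
    ∫ x in 0..R, y x ^ 2 ≤ 16 / k ^ 2 * ∫ x in 0..R, (y' x + 2 * k * tanh (k * x) * y x) ^ 2 := by
  -- with `t = tanh (k x) ∈ [0, 1)`: `2 V n - n' = k (1 + 8t - 5t²) ≥ k` and `n² ≤ 4`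
  have h := integral_sq_le_of_multiplier (n := fun x => 2 - tanh (k * x))
    (V := fun x => 2 * k * tanh (k * x)) (α := k) (M := 4) hR hk hy
    (fun x => (hasDerivAt_tanh_mul k x).const_sub 2) hy'c (by fun_prop) (by fun_prop)
    (fun x hx => by
      have ht0 := tanh_nonneg (mul_nonneg hk.le hx.1)
      have ht1 := (tanh_lt_one (k * x)).le
      nlinarith [mul_nonneg (mul_nonneg hk.le ht0) (sub_nonneg.2 ht1)])
    (fun x hx => by
      have ht0 := tanh_nonneg (mul_nonneg hk.le hx.1)
      nlinarith [(tanh_lt_one (k * x)).le])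
    (by
      show (2 - tanh (k * 0)) * y 0 ^ 2 ≤ (2 - tanh (k * R)) * y R ^ 2
      rw [hy0]
      nlinarith [tanh_lt_one (k * R), sq_nonneg (y R)])
  convert h using 2
  norm_num

theorem intervalIntegral_sq_le_of_apply_zero_symm {k R : ℝ} {y y' : ℝ → ℝ} (hk : 0 < k)
    (hR : 0 ≤ R) (hy : ∀ x, HasDerivAt y (y' x) x) (hy'c : Continuous y') (hy0 : y 0 = 0) :
    ∫ x in -R..R, y x ^ 2 ≤
      16 / k ^ 2 * ∫ x in -R..R, (y' x + 2 * k * tanh (k * x) * y x) ^ 2 := by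
  have hyc : Continuous y := continuous_iff_continuousAt.2 fun x => (hy x).continuousAt
  have hleft := intervalIntegral_sq_le_of_apply_zero (y := fun x => y (-x))
    (y' := fun x => -y' (-x)) hk hR
    (fun x => ((hy (-x)).comp x (hasDerivAt_neg x)).congr_deriv (by ring)) (by fun_prop)
    (by simpa using hy0)
  have hflip : ∀ x, (-y' (-x) + 2 * k * tanh (k * x) * y (-x)) ^ 2 =
      (y' (-x) + 2 * k * tanh (k * -x) * y (-x)) ^ 2 := fun x => by
    rw [mul_neg, tanh_neg]; ring
  simp only [hflip] at hleft
  rw [intervalIntegral.integral_comp_neg (fun x => y x ^ 2),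
    intervalIntegral.integral_comp_neg (fun x => (y' x + 2 * k * tanh (k * x) * y x) ^ 2),
    neg_zero] at hleft
  have hy2c : Continuous fun x => y x ^ 2 := by fun_prop
  have hAy2c : Continuous fun x => (y' x + 2 * k * tanh (k * x) * y x) ^ 2 := by fun_prop
  rw [← intervalIntegral.integral_add_adjacent_intervals (b := 0)
      (hy2c.intervalIntegrable _ _) (hy2c.intervalIntegrable _ _),
    ← intervalIntegral.integral_add_adjacent_intervals (b := 0)
      (hAy2c.intervalIntegrable _ _) (hAy2c.intervalIntegrable _ _), mul_add]
  exact add_le_add hleft (intervalIntegral_sq_le_of_apply_zero hk hR hy hy'c hy0)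

theorem integral_sq_le_of_apply_zero {k : ℝ} {y y' : ℝ → ℝ} (hk : 0 < k)
    (hy : ∀ x, HasDerivAt y (y' x) x) (hy'c : Continuous y') (hy0 : y 0 = 0)
    (hy2 : Integrable fun x => y x ^ 2)
    (hAy : Integrable fun x => (y' x + 2 * k * tanh (k * x) * y x) ^ 2) :
    ∫ x, y x ^ 2 ≤ 16 / k ^ 2 * ∫ x, (y' x + 2 * k * tanh (k * x) * y x) ^ 2 :=
  le_of_tendsto_of_tendsto
    (intervalIntegral_tendsto_integral hy2 tendsto_neg_atTop_atBot tendsto_id)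
    ((intervalIntegral_tendsto_integral hAy tendsto_neg_atTop_atBot tendsto_id).const_mul _)
    (eventually_ge_atTop 0 |>.mono fun _ hR =>
      intervalIntegral_sq_le_of_apply_zero_symm hk hR hy hy'c hy0)

theorem memLp_one_sub_tanh_sq {k : ℝ} (hk : k ≠ 0) :
    MemLp (fun x => 1 - tanh (k * x) ^ 2) 2 := by
  refine (memLp_two_iff_integrable_sq (by fun_prop : Continuous _).aestronglyMeasurable).2 ?_
  refine (integrable_inv_one_add_sq.comp_mul_left' hk).mono'
    (by fun_prop : Continuous _).aestronglyMeasurable (ae_of_all _ fun x => ?_)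
  have h0 := one_sub_tanh_sq_nonneg (k * x)
  have h1 : 1 - tanh (k * x) ^ 2 ≤ 1 := by linarith [sq_nonneg (tanh (k * x))]
  rw [Real.norm_eq_abs, abs_of_nonneg (sq_nonneg _)]
  exact (pow_le_of_le_one h0 h1 two_ne_zero).trans (one_sub_tanh_sq_le_inv_one_add_sq _)

theorem integral_sq_le_of_integral_mul_one_sub_tanh_sq_eq_zero {k : ℝ} {z z' : ℝ → ℝ}
    (hk : 0 < k) (hz : ∀ x, HasDerivAt z (z' x) x) (hz'c : Continuous z') (hz2 : MemLp z 2)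
    (hz'2 : MemLp z' 2) (horth : ∫ x, z x * (1 - tanh (k * x) ^ 2) = 0) :
    ∫ x, z x ^ 2 ≤ 16 / k ^ 2 * ∫ x, (z' x + 2 * k * tanh (k * x) * z x) ^ 2 := by
  have hψ := memLp_one_sub_tanh_sq hk.ne'
  have hψ' : ∀ x, HasDerivAt (fun x => 1 - tanh (k * x) ^ 2)
      (-(2 * k * tanh (k * x) * (1 - tanh (k * x) ^ 2))) x := fun x =>
    (((hasDerivAt_tanh_mul k x).pow 2).const_sub 1).congr_deriv (by push_cast; ring)
  have hzc : Continuous z := continuous_iff_continuousAt.2 fun x => (hz x).continuousAt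
  have hVz : MemLp (fun x => 2 * k * tanh (k * x) * z x) 2 :=
    hz2.of_le_mul (c := 2 * k)
      ((by fun_prop : Continuous fun x => 2 * k * tanh (k * x)).aestronglyMeasurable.mul hz2.1)
      (ae_of_all _ fun x => by
        rw [norm_mul, norm_mul, Real.norm_eq_abs, Real.norm_eq_abs, abs_of_pos (by positivity)]
        exact mul_le_mul_of_nonneg_right (by nlinarith [abs_tanh_lt_one (k * x)]) (norm_nonneg _))
  have hAy : ∀ x, z' x - z 0 * -(2 * k * tanh (k * x) * (1 - tanh (k * x) ^ 2))
      + 2 * k * tanh (k * x) * (z x - z 0 * (1 - tanh (k * x) ^ 2))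
      = z' x + 2 * k * tanh (k * x) * z x := fun x => by ring
  have hy2 : MemLp (fun x => z x - z 0 * (1 - tanh (k * x) ^ 2)) 2 := hz2.sub (hψ.const_mul (z 0))
  have hAz : MemLp (fun x => z' x + 2 * k * tanh (k * x) * z x) 2 := hz'2.add hVz
  have hy := integral_sq_le_of_apply_zero hk (y := fun x => z x - z 0 * (1 - tanh (k * x) ^ 2))
    (fun x => (hz x).sub ((hψ' x).const_mul (z 0))) (by fun_prop) (by simp)
    hy2.integrable_sq (by simpa only [hAy] using hAz.integrable_sq)
  simp only [hAy] at hy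
  exact (integral_sq_le_integral_sub_mul_sq hz2 hψ horth (z 0)).trans hy

-- `z'` plays the role of the derivative of `z`
noncomputable def kinkQuadForm (c : ℝ) (z z' : ℝ → ℝ) : ℝ :=
  ∫ x, (z' x ^ 2 + 2 * c * z x ^ 2 - 3 * (c - kink c x ^ 2) * z x ^ 2)

theorem kink_eq (c x : ℝ) : kink c x = √c * tanh (√c / √2 * x) := by
  rw [kink, mul_div_right_comm]

@[fun_prop]
theorem continuous_kink (c : ℝ) : Continuous (kink c) := by
  unfold kink; fun_prop

theorem hasDerivAt_kink (c x : ℝ) :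
    HasDerivAt (kink c) (√c * (√c / √2 * (1 - tanh (√c / √2 * x) ^ 2))) x := by
  rw [show kink c = fun x => √c * tanh (√c / √2 * x) from funext (kink_eq c)]
  exact (hasDerivAt_tanh_mul _ x).const_mul _

theorem kink_sq {c : ℝ} (hc : 0 ≤ c) (x : ℝ) : kink c x ^ 2 = c * tanh (√c / √2 * x) ^ 2 := by
  rw [kink_eq, mul_pow, sq_sqrt hc]

theorem sqrt_div_sqrt_two_sq {c : ℝ} (hc : 0 ≤ c) : (√c / √2) ^ 2 = c / 2 := by
  rw [div_pow, sq_sqrt hc, sq_sqrt zero_le_two]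

theorem kinkQuadForm_eq_integral_sq {c : ℝ} {z z' : ℝ → ℝ} (hc : 0 ≤ c)
    (hz : ∀ x, HasDerivAt z (z' x) x) (hz2 : MemLp z 2) (hz'2 : MemLp z' 2) :
    kinkQuadForm c z z' =
      ∫ x, (z' x + 2 * (√c / √2) * tanh (√c / √2 * x) * z x) ^ 2 := by
  set k := √c / √2
  have hk : 0 ≤ k := by positivity
  rw [integral_sq_deriv_add_mul_eq hz (fun x => (hasDerivAt_tanh_mul k x).const_mul (2 * k))
    (by fun_prop) (B := 2 * k) (B' := 2 * k * k) _ _ hz2 hz'2]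
  · unfold kinkQuadForm
    congr 1; ext x
    rw [kink_sq hc]
    linear_combination -2 * (3 * tanh (k * x) ^ 2 - 1) * z x ^ 2 * sqrt_div_sqrt_two_sq hc
  · intro x
    rw [abs_mul, abs_of_nonneg (by positivity)]
    exact mul_le_of_le_one_right (by positivity) (abs_tanh_lt_one _).le
  · intro x
    have ht := one_sub_tanh_sq_nonneg (k * x)
    rw [abs_of_nonneg (by positivity)]
    exact mul_le_mul_of_nonneg_left
      (mul_le_of_le_one_right hk (by linarith [sq_nonneg (tanh (k * x))])) (by positivity)

theorem integral_sq_sub_le_kinkQuadForm {c : ℝ} {z z' : ℝ → ℝ} (hc : 0 ≤ c)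
    (hz2 : MemLp z 2) (hz'2 : MemLp z' 2) :
    (∫ x, z' x ^ 2) - c * ∫ x, z x ^ 2 ≤ kinkQuadForm c z z' := by
  have hW : ∀ x, ‖3 * (c - kink c x ^ 2)‖ ≤ 3 * c := fun x => by
    have := tanh_sq_lt_one (√c / √2 * x)
    rw [kink_sq hc, Real.norm_eq_abs, abs_le]
    constructor <;> nlinarith [sq_nonneg (tanh (√c / √2 * x))]
  have hQ_int : Integrable fun x => z' x ^ 2 + 2 * c * z x ^ 2 - 3 * (c - kink c x ^ 2) * z x ^ 2 :=
    (hz'2.integrable_sq.add (hz2.integrable_sq.const_mul (2 * c))).sub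
      (hz2.integrable_sq.bdd_mul (by fun_prop) (ae_of_all _ hW))
  rw [← integral_const_mul, ← integral_sub hz'2.integrable_sq (hz2.integrable_sq.const_mul c)]
  refine integral_mono (hz'2.integrable_sq.sub (hz2.integrable_sq.const_mul c)) hQ_int fun x => ?_
  nlinarith [mul_nonneg (sq_nonneg (kink c x)) (sq_nonneg (z x))]

theorem integral_sq_le_kinkQuadForm {c : ℝ} {z z' : ℝ → ℝ} (hc : 0 < c)
    (hz : ∀ x, HasDerivAt z (z' x) x) (hz'c : Continuous z') (hz2 : MemLp z 2)
    (hz'2 : MemLp z' 2) (horth : ∫ x, z x * deriv (kink c) x = 0) :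
    ∫ x, z x ^ 2 ≤ 32 / c * kinkQuadForm c z z' := by
  set k := √c / √2
  have hk : 0 < k := by positivity
  have horth' : ∫ x, z x * (1 - tanh (k * x) ^ 2) = 0 := by
    have h : √c * k * ∫ x, z x * (1 - tanh (k * x) ^ 2) = 0 := by
      rw [← integral_const_mul, ← horth]
      congr 1; ext x
      rw [(hasDerivAt_kink c x).deriv]; ring
    exact (mul_eq_zero.1 h).resolve_left (by positivity)
  rw [kinkQuadForm_eq_integral_sq hc.le hz hz2 hz'2,
    show 32 / c = 16 / k ^ 2 by rw [sqrt_div_sqrt_two_sq hc.le]; field_simp; norm_num]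
  exact integral_sq_le_of_integral_mul_one_sub_tanh_sq_eq_zero hk hz hz'c hz2 hz'2 horth'

theorem stmt15 (c : ℝ) (hc : 0 < c) :
    ∃ lam : ℝ, 0 < lam ∧
      ∀ z : ℝ → ℝ, ContDiff ℝ 1 z →
        MeasureTheory.Integrable (fun x => (z x) ^ 2) →
        MeasureTheory.Integrable (fun x => (deriv z x) ^ 2) →
        (∫ x : ℝ, z x * deriv (kink c) x) = 0 →
        (1 / 2) * (∫ x : ℝ, ((deriv z x) ^ 2 + 2 * c * (z x) ^ 2
            - 3 * (c - (kink c x) ^ 2) * (z x) ^ 2))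
          ≥ lam * ∫ x : ℝ, ((deriv z x) ^ 2 + (z x) ^ 2) := by
  refine ⟨min (1 / 132) (c / 128), by positivity, fun z hz hz2 hz'2 horth => ?_⟩
  have hzd : ∀ x, HasDerivAt z (deriv z x) x := fun x =>
    (hz.differentiable one_ne_zero x).hasDerivAt
  have hz'c : Continuous (deriv z) := hz.continuous_deriv le_rfl
  have hzL2 : MemLp z 2 := (memLp_two_iff_integrable_sq hz.continuous.aestronglyMeasurable).2 hz2
  have hz'L2 : MemLp (deriv z) 2 :=
    (memLp_two_iff_integrable_sq hz'c.aestronglyMeasurable).2 hz'2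
  have hlower := integral_sq_sub_le_kinkQuadForm hc.le hzL2 hz'L2
  have hpoinc := integral_sq_le_kinkQuadForm hc hzd hz'c hzL2 hz'L2 horth
  change (1 / 2) * kinkQuadForm c z (deriv z) ≥ _
  rw [integral_add hz'2 hz2]
  set Q := kinkQuadForm c z (deriv z)
  set A := ∫ x, deriv z x ^ 2
  set B := ∫ x, z x ^ 2
  have hA : 0 ≤ A := integral_nonneg fun x => sq_nonneg _
  have hB : 0 ≤ B := integral_nonneg fun x => sq_nonneg _
  have hcB : c * B ≤ 32 * Q := by
    rw [div_mul_eq_mul_div, le_div_iff₀ hc] at hpoinc; linarith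
  have h1 := mul_le_mul_of_nonneg_right (min_le_left (1 / 132) (c / 128)) hA
  have h2 := mul_le_mul_of_nonneg_right (min_le_right (1 / 132) (c / 128)) hB
  linarith
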